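/- arXiv:1309.7752 — 2 statements merged into one kernel-verified Lean document; each statement's English description precedes it below -/
import Mathlib

section
/- Let k ≥ 2 and suppose that for each j = 1,…,k the variables X_{j1} satisfy E|X_{j1}|³ < ∞ and X_{j1} is distributed on the lattice {x_j + ν e_j : ν ∈ ℤ} with maximal lattice edge width e_j, that min_{1≤j≤k} liminf_{n→∞} n_j/n > 0, that all the points x_j are equal, and that for every pair j₁ < j₂ the ratio ρ_{j₁j₂} = (e_{j₂} n_{j₁})/(e_{j₁} n_{j₂}) equals a fixed rational number not depending on n. Then the one-term Edgeworth expansion fails: it is NOT the case that sup_{x∈ℝ} |P{(S − E S)/(Var S)^{1/2} ≤ x} − Φ(x) − n^{−1/2}(β/6)(1 − x²)φ(x)| = o(n^{−1/2}); equivalently, limsup_{n→∞} n^{1/2} sup_{x∈ℝ} |P{(S − E S)/(Var S)^{1/2} ≤ x} − Φ(x) − n^{−1/2}(β/6)(1 − x²)φ(x)| > 0. -/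
/-!
Every `X_{ji}` lies on `x + e_j ℤ`, so `S` lies on `k x + Σ_j (e_j / n_j) ℤ`. Since the ratios
`ρ_{1j}` are fixed rationals, every `e_j / n_j` is an integer multiple of `h = e_1 / (n_1 D)` for
a common denominator `D`; thus `S` lives on a lattice of span `h ≍ 1 / n`, while its standard
deviation is `O(n^{-1/2})`. By Chebyshev, three quarters of the mass of `S` sit on
`O(n^{1/2})` lattice points, so `S` has an atom of mass `≳ n^{-1/2}`, i.e. the standardized
distribution function jumps by that much. A left-continuous approximation such as the one-term
Edgeworth expansion misses the jump by at least half its size, so its uniform error is not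
`o(n^{-1/2})`.
-/

open MeasureTheory ProbabilityTheory Filter

/-- Standard normal density. -/
noncomputable def gphi (x : ℝ) : ℝ := (Real.sqrt (2 * Real.pi))⁻¹ * Real.exp (-x ^ 2 / 2)

/-- Standard normal distribution function. -/
noncomputable def gPhi (x : ℝ) : ℝ := ∫ t in Set.Iic x, gphi t

open Topology Finset

lemma integrable_gphi : Integrable gphi := by
  have h := (integrable_exp_neg_mul_sq (b := 1 / 2) (by norm_num)).const_mul
    (Real.sqrt (2 * Real.pi))⁻¹
  refine h.congr (ae_of_all _ fun x => ?_)
  simp only [gphi]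
  ring_nf

lemma continuous_gphi : Continuous gphi := by
  unfold gphi; fun_prop

lemma continuousWithinAt_gPhi_Iic (t : ℝ) : ContinuousWithinAt gPhi (Set.Iic t) t :=
  integrable_gphi.integrableOn.continuousOn_Iic_primitive_Iic t Set.self_mem_Iic

/-- `a` stands for `n^{-1/2} β / 6`. -/
noncomputable def edgeworthOneTerm (a x : ℝ) : ℝ := gPhi x + a * (1 - x ^ 2) * gphi x

lemma continuousWithinAt_edgeworthOneTerm_Iic (a t : ℝ) :
    ContinuousWithinAt (edgeworthOneTerm a) (Set.Iic t) t :=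
  (continuousWithinAt_gPhi_Iic t).add
    ((by fun_prop : Continuous fun x : ℝ => a * (1 - x ^ 2)).mul
      continuous_gphi).continuousWithinAt

lemma card_Icc_ceil_floor_le {a b : ℝ} (hab : a ≤ b + 1) :
    ((Icc ⌈a⌉ ⌊b⌋).card : ℝ) ≤ b - a + 1 := by
  have hcard : ((Icc ⌈a⌉ ⌊b⌋).card : ℤ) = max (⌊b⌋ + 1 - ⌈a⌉) 0 := by
    rw [Int.card_Icc, Int.toNat_eq_max]
  have hcard' : ((Icc ⌈a⌉ ⌊b⌋).card : ℝ) = max ((⌊b⌋ : ℝ) + 1 - ⌈a⌉) 0 := by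
    exact_mod_cast hcard
  rw [hcard']
  exact max_le (by linarith [Int.floor_le b, Int.le_ceil a]) (by linarith)

lemma exists_pos_nat_forall_rat_mul_mem_zmultiples {ι : Type*} [Fintype ι] (q : ι → ℚ) :
    ∃ D : ℕ, 0 < D ∧ ∀ (u : ℝ) j, (q j : ℝ) * u ∈ AddSubgroup.zmultiples (u / D) := by
  refine ⟨∏ j, (q j).den, prod_pos fun j _ => (q j).pos, fun u j => ?_⟩
  obtain ⟨t, ht⟩ := dvd_prod_of_mem (fun j => (q j).den) (mem_univ j)
  refine AddSubgroup.mem_zmultiples_iff.2 ⟨(q j).num * t, ?_⟩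
  have hden : ((q j).den : ℝ) ≠ 0 := by exact_mod_cast (q j).den_nz
  have ht0 : (t : ℝ) ≠ 0 := by
    rintro h0
    exact (prod_pos fun j _ => (q j).pos).ne' (by simpa [Nat.cast_eq_zero.1 h0] using ht)
  have ht' : ((∏ j, (q j).den : ℕ) : ℝ) = (q j).den * t := by exact_mod_cast ht
  rw [zsmul_eq_mul, ht', Rat.cast_def]
  push_cast
  field_simp

lemma exists_rat_forall_div_eq_rat_mul_div {ι : Type*} [LinearOrder ι] {e : ι → ℝ}
    {N : ℕ → ι → ℕ} (he : ∀ j, e j ≠ 0) (hN : ∀ m j, N m j ≠ 0)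
    (hρ : ∀ j₁ j₂ : ι, j₁ < j₂ → ∃ q : ℚ, ∀ m,
      (e j₂ * (N m j₁ : ℝ)) / (e j₁ * (N m j₂ : ℝ)) = (q : ℝ)) (j₀ j : ι) :
    ∃ q : ℚ, ∀ m, e j / N m j = q * (e j₀ / N m j₀) := by
  have hN' : ∀ m j, (N m j : ℝ) ≠ 0 := fun m j => Nat.cast_ne_zero.2 (hN m j)
  rcases lt_trichotomy j₀ j with h | rfl | h
  · obtain ⟨q, hq⟩ := hρ j₀ j h
    refine ⟨q, fun m => ?_⟩
    rw [← hq m]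
    field_simp [he j₀, hN' m j₀, hN' m j]
  · exact ⟨1, fun m => by simp⟩
  · obtain ⟨q, hq⟩ := hρ j j₀ h
    refine ⟨q⁻¹, fun m => ?_⟩
    rw [Rat.cast_inv, ← hq m]
    field_simp [he j, he j₀, hN' m j₀, hN' m j]

lemma eventually_sum_div_le_div_of_liminf_pos {ι : Type*} [Fintype ι] (a : ι → ℝ)
    (ha : ∀ j, 0 ≤ a j) {N : ℕ → ι → ℕ} {n : ℕ → ℕ}
    (hfrac : ∀ j, 0 < liminf (fun m => (N m j : ℝ) / (n m : ℝ)) atTop) :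
    ∃ C : ℝ, ∀ᶠ m in atTop, ∑ j, a j / N m j ≤ C / n m := by
  have hlower : ∀ j, ∀ᶠ m in atTop,
      liminf (fun m => (N m j : ℝ) / (n m : ℝ)) atTop / 2 < (N m j : ℝ) / n m := fun j =>
    eventually_lt_of_lt_liminf (half_lt_self (hfrac j))
      ⟨0, eventually_map.2 (.of_forall fun m => by positivity)⟩
  refine ⟨∑ j, a j / (liminf (fun m => (N m j : ℝ) / (n m : ℝ)) atTop / 2),
    (eventually_all.2 hlower).mono fun m hm => ?_⟩
  rw [sum_div]
  refine sum_le_sum fun j _ => ?_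
  have hn : (n m : ℝ) ≠ 0 := fun h0 => by simpa [h0] using (half_pos (hfrac j)).trans (hm j)
  calc a j / N m j = a j / ((N m j : ℝ) / n m) / n m := by field_simp
    _ ≤ a j / (liminf (fun m => (N m j : ℝ) / (n m : ℝ)) atTop / 2) / n m :=
      div_le_div_of_nonneg_right (div_le_div_of_nonneg_left (ha j) (half_pos (hfrac j)) (hm j).le)
        (Nat.cast_nonneg _)

lemma four_mul_sqrt_div_add_one_le {C V e D N n : ℝ} (he : 0 < e) (hD : 0 < D) (hN : 1 ≤ N)
    (hNn : N ≤ n) (hV : V ≤ C / n) :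
    4 * √V / (e / N / D) + 1 ≤ (4 * D * √C / e + 1) * √n := by
  have hn : 0 < n := by linarith
  have hVn : √V * √n ≤ √C := by
    rw [← Real.sqrt_mul' V hn.le]
    exact Real.sqrt_le_sqrt ((le_div_iff₀ hn).1 hV)
  calc 4 * √V / (e / N / D) + 1 = 4 * D / e * (√V * N) + 1 := by field_simp
    _ ≤ 4 * D / e * (√V * (√n * √n)) + √n := by
        rw [Real.mul_self_sqrt hn.le]
        exact add_le_add (by gcongr) (Real.one_le_sqrt.2 (hN.trans hNn))
    _ ≤ 4 * D / e * (√C * √n) + √n := by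
        rw [← mul_assoc √V]
        gcongr
    _ = (4 * D * √C / e + 1) * √n := by ring

lemma ProbabilityTheory.IdentDistrib.ae_sub_mem_zmultiples {α β : Type*}
    [MeasurableSpace α] [MeasurableSpace β] {μ : Measure α} {ν : Measure β} {f : α → ℝ}
    {g : β → ℝ} (hfg : IdentDistrib f g μ ν)
    {x e : ℝ} (hf : ∀ᵐ a ∂μ, f a - x ∈ AddSubgroup.zmultiples e) :
    ∀ᵐ b ∂ν, g b - x ∈ AddSubgroup.zmultiples e :=
  hfg.ae_snd (p := fun y => y - x ∈ AddSubgroup.zmultiples e)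
    ((AddSubgroup.coe_zmultiples e ▸ Set.countable_range _ :
      (AddSubgroup.zmultiples e : Set ℝ).Countable).measurableSet.preimage
        (measurable_id.sub_const x)) hf

section Lattice

variable {Ω : Type*} [MeasurableSpace Ω] {μ : Measure Ω}

lemma memLp_two_of_integrable_abs_pow_three [IsFiniteMeasure μ] {Y : Ω → ℝ}
    (hY : AEStronglyMeasurable Y μ) (h3 : Integrable (fun ω => |Y ω| ^ 3) μ) : MemLp Y 2 μ := by
  have hLp3 : MemLp Y 3 μ := by
    rw [← integrable_norm_rpow_iff hY (by norm_num) (by norm_num)]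
    simpa [Real.norm_eq_abs] using h3
  exact hLp3.mono_exponent (by norm_num)

lemma measureReal_eq_le_two_mul_of_abs_cdf_sub_le [IsFiniteMeasure μ] {Y : Ω → ℝ}
    (hY : AEMeasurable Y μ) {G : ℝ → ℝ} {t δ : ℝ} (hG : ContinuousWithinAt G (Set.Iio t) t)
    (hYG : ∀ x, |μ.real {ω | Y ω ≤ x} - G x| ≤ δ) : μ.real {ω | Y ω = t} ≤ 2 * δ := by
  have hjump : ∀ y < t, μ.real {ω | Y ω = t} ≤ 2 * δ + (G t - G y) := by
    intro y hy
    have hdisj : Disjoint {ω | Y ω ≤ y} {ω | Y ω = t} :=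
      Set.disjoint_left.2 fun ω hle heq => by
        simp only [Set.mem_ofPred_eq] at hle heq
        linarith
    have hsub : {ω | Y ω ≤ y} ∪ {ω | Y ω = t} ⊆ {ω | Y ω ≤ t} := by
      rintro ω (hle | heq)
      · exact le_trans hle hy.le
      · exact heq.le
    have hsplit := measureReal_union₀' (μ := μ) (s := {ω | Y ω ≤ y}) (t := {ω | Y ω = t})
      (hY.nullMeasurable measurableSet_Iic) hdisj.aedisjoint
    have hmono := measureReal_mono (μ := μ) hsub
    linarith [abs_le.1 (hYG t), abs_le.1 (hYG y)]
  have hlim : Tendsto (fun y => 2 * δ + (G t - G y)) (𝓝[<] t) (𝓝 (2 * δ)) := by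
    have h := (tendsto_const_nhds (x := 2 * δ)).add ((tendsto_const_nhds (x := G t)).sub hG)
    simpa using h
  exact ge_of_tendsto hlim (eventually_nhdsWithin_of_forall hjump)

lemma one_sub_variance_div_sq_le_measureReal [IsProbabilityMeasure μ] {T : Ω → ℝ}
    (hT : MemLp T 2 μ) {c : ℝ} (hc : 0 < c) :
    1 - variance T μ / c ^ 2 ≤ μ.real {ω | |T ω - μ[T]| < c} := by
  have hcover : Set.univ ⊆ {ω | |T ω - μ[T]| < c} ∪ {ω | c ≤ |T ω - μ[T]|} :=
    fun ω _ => by simpa only [Set.mem_union, Set.mem_ofPred_eq] using lt_or_ge _ _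
  have htail : μ.real {ω | c ≤ |T ω - μ[T]|} ≤ variance T μ / c ^ 2 := by
    have := ENNReal.toReal_mono ENNReal.ofReal_ne_top (meas_ge_le_variance_div_sq hT hc)
    rwa [ENNReal.toReal_ofReal (div_nonneg (variance_nonneg T μ) (sq_nonneg c))] at this
  have := (measureReal_mono (μ := μ) hcover).trans (measureReal_union_le _ _)
  rw [probReal_univ] at this
  linarith

/-- Pigeonhole over the at most `(hi - lo) / h + 1` lattice points in `[lo, hi]`. -/
lemma exists_measureReal_eq_ge_of_ae_sub_mem_zmultiples [IsFiniteMeasure μ] {T : Ω → ℝ}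
    {c h lo hi : ℝ} (hh : 0 < h) (hlo : lo ≤ hi)
    (hT : ∀ᵐ ω ∂μ, T ω - c ∈ AddSubgroup.zmultiples h) :
    ∃ x₀, μ.real {ω | T ω ∈ Set.Icc lo hi} / ((hi - lo) / h + 1) ≤ μ.real {ω | T ω = x₀} := by
  set Z := Icc ⌈(lo - c) / h⌉ ⌊(hi - c) / h⌋
  set L := (hi - lo) / h + 1
  have hL : 0 < L := by positivity
  have hcover : μ.real {ω | T ω ∈ Set.Icc lo hi} ≤ ∑ z ∈ Z, μ.real {ω | T ω = c + z * h} := by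
    refine (ENNReal.toReal_mono (measure_ne_top _ _) (measure_mono_ae ?_)).trans
      (measureReal_biUnion_finset_le Z _)
    filter_upwards [hT] with ω hω hmem
    obtain ⟨z, hz⟩ := AddSubgroup.mem_zmultiples_iff.1 hω
    rw [zsmul_eq_mul] at hz
    obtain ⟨hlo', hhi'⟩ := hmem
    refine Set.mem_biUnion (x := z) (mem_Icc.2 ⟨?_, ?_⟩)
      (by simp only [Set.mem_ofPred_eq]; linarith)
    · exact Int.ceil_le.2 ((div_le_iff₀ hh).2 (by linarith))
    · exact Int.le_floor.2 ((le_div_iff₀ hh).2 (by linarith))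
  have hcard : (Z.card : ℝ) ≤ L := by
    have := card_Icc_ceil_floor_le (a := (lo - c) / h) (b := (hi - c) / h)
      (by rw [div_le_iff₀ hh, add_mul, div_mul_cancel₀ _ hh.ne']; nlinarith)
    have hdiff : (hi - c) / h - (lo - c) / h = (hi - lo) / h := by ring
    linarith
  rcases Z.eq_empty_or_nonempty with hZ | hZ
  · refine ⟨0, div_nonpos_of_nonpos_of_nonneg ?_ hL.le |>.trans measureReal_nonneg⟩
    simpa [hZ] using hcover
  · have hspread : ∑ _z ∈ Z, μ.real {ω | T ω ∈ Set.Icc lo hi} / L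
        ≤ μ.real {ω | T ω ∈ Set.Icc lo hi} := by
      rw [sum_const, nsmul_eq_mul, mul_div_assoc']
      exact div_le_of_le_mul₀ hL.le measureReal_nonneg
        ((mul_le_mul_of_nonneg_right hcard measureReal_nonneg).trans_eq (mul_comm _ _))
    obtain ⟨z, -, hz⟩ := exists_le_of_sum_le hZ (hspread.trans hcover)
    exact ⟨c + z * h, hz⟩

lemma cdf_approx_error_ge_of_ae_sub_mem_zmultiples [IsProbabilityMeasure μ] {T : Ω → ℝ}
    (hT : MemLp T 2 μ) (hvar : 0 < variance T μ) {c h : ℝ} (hh : 0 < h)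
    (hlat : ∀ᵐ ω ∂μ, T ω - c ∈ AddSubgroup.zmultiples h) {G : ℝ → ℝ}
    (hG : ∀ t, ContinuousWithinAt G (Set.Iio t) t) {δ : ℝ}
    (hTG : ∀ x, |μ.real {ω | (T ω - μ[T]) / √(variance T μ) ≤ x} - G x| ≤ δ) :
    3 / 4 / (4 * √(variance T μ) / h + 1) ≤ 2 * δ := by
  set σ := √(variance T μ)
  have hσ : 0 < σ := Real.sqrt_pos.2 hvar
  have hcheb : 3 / 4 ≤ μ.real {ω | T ω ∈ Set.Icc (μ[T] - 2 * σ) (μ[T] + 2 * σ)} := by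
    have h := one_sub_variance_div_sq_le_measureReal hT (c := 2 * σ) (by positivity)
    rw [mul_pow, Real.sq_sqrt hvar.le] at h
    refine le_trans (by field_simp; norm_num) (h.trans (measureReal_mono fun ω hω => ?_))
    obtain ⟨h₁, h₂⟩ := abs_lt.1 (Set.mem_ofPred_eq ▸ hω)
    exact ⟨by linarith, by linarith⟩
  obtain ⟨x₀, hx₀⟩ := exists_measureReal_eq_ge_of_ae_sub_mem_zmultiples
    (lo := μ[T] - 2 * σ) (hi := μ[T] + 2 * σ) hh (by linarith) hlat
  have hY : AEMeasurable (fun ω => (T ω - μ[T]) / σ) μ :=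
    (hT.aestronglyMeasurable.aemeasurable.sub_const _).div_const _
  have hjump := measureReal_eq_le_two_mul_of_abs_cdf_sub_le hY (hG ((x₀ - μ[T]) / σ)) hTG
  have hatom : {ω | T ω = x₀} ⊆ {ω | (T ω - μ[T]) / σ = (x₀ - μ[T]) / σ} :=
    fun ω hω => by simp only [Set.mem_ofPred_eq] at hω ⊢; rw [hω]
  have hlen : μ[T] + 2 * σ - (μ[T] - 2 * σ) = 4 * σ := by ring
  rw [hlen] at hx₀
  calc 3 / 4 / (4 * σ / h + 1)
      ≤ μ.real {ω | T ω ∈ Set.Icc (μ[T] - 2 * σ) (μ[T] + 2 * σ)} / (4 * σ / h + 1) := by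
        gcongr
    _ ≤ 2 * δ := hx₀.trans ((measureReal_mono hatom).trans hjump)

end Lattice

section SampleMeans

variable {Ω ι : Type*} [MeasurableSpace Ω] {μ : Measure Ω} [Fintype ι]

noncomputable def sumSampleMeans (X : ι → ℕ → Ω → ℝ) (N : ι → ℕ) (ω : Ω) : ℝ :=
  ∑ j, (N j : ℝ)⁻¹ * ∑ i ∈ range (N j), X j i ω

variable {X : ι → ℕ → Ω → ℝ}

lemma memLp_sumSampleMeans (hX : ∀ j, MemLp (X j 0) 2 μ)
    (hid : ∀ j i, IdentDistrib (X j i) (X j 0) μ μ) (N : ι → ℕ) :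
    MemLp (sumSampleMeans X N) 2 μ := by
  have h := memLp_finsetSum' (μ := μ) (p := 2) univ fun j _ => (memLp_finsetSum' (range (N j))
    fun i _ => (hid j i).symm.memLp_snd (hX j)).const_mul (N j : ℝ)⁻¹
  convert h using 1
  ext ω
  simp [sumSampleMeans, Finset.sum_apply]

lemma variance_sumSampleMeans (hX : ∀ j, MemLp (X j 0) 2 μ)
    (hid : ∀ j i, IdentDistrib (X j i) (X j 0) μ μ)
    (hind : iIndepFun (fun p : ι × ℕ => X p.1 p.2) μ) (N : ι → ℕ) :
    variance (sumSampleMeans X N) μ = ∑ j, variance (X j 0) μ / N j := by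
  classical
  set F : Finset (ι × ℕ) := univ.biUnion fun j => {j} ×ˢ range (N j)
  have hF : ∀ p : ι × ℕ, p ∈ F ↔ p.1 ∈ univ ∧ p.2 ∈ range (N p.1) := by
    rintro ⟨j, i⟩
    simp [F]
  have hsum : sumSampleMeans X N = ∑ p ∈ F, fun ω => (N p.1 : ℝ)⁻¹ * X p.1 p.2 ω := by
    ext ω
    simp only [sumSampleMeans, Finset.sum_apply, mul_sum,
      sum_finset_product F univ (fun j => range (N j)) hF]
  have hpair : (F : Set (ι × ℕ)).Pairwise fun p q => IndepFun
      (fun ω => (N p.1 : ℝ)⁻¹ * X p.1 p.2 ω) (fun ω => (N q.1 : ℝ)⁻¹ * X q.1 q.2 ω) μ :=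
    fun p _ q _ hpq => (hind.indepFun hpq).comp (measurable_const_mul _) (measurable_const_mul _)
  have hmem : ∀ p ∈ F, MemLp (fun ω => (N p.1 : ℝ)⁻¹ * X p.1 p.2 ω) 2 μ := fun p _ =>
    ((hid p.1 p.2).symm.memLp_snd (hX p.1)).const_mul _
  rw [hsum, IndepFun.variance_sum hmem hpair, sum_finset_product F univ (fun j => range (N j)) hF]
  refine sum_congr rfl fun j _ => ?_
  rw [sum_congr rfl fun i _ => by rw [variance_const_mul, (hid j i).variance_eq]]
  simp only [sum_const, card_range, nsmul_eq_mul]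
  rcases eq_or_ne (N j) 0 with h | h
  · simp [h]
  · field_simp

lemma ae_sumSampleMeans_sub_mem_zmultiples (hid : ∀ j i, IdentDistrib (X j i) (X j 0) μ μ)
    {x h : ℝ} {e : ι → ℝ} (hlat : ∀ j, ∀ᵐ ω ∂μ, X j 0 ω - x ∈ AddSubgroup.zmultiples (e j))
    {N : ι → ℕ} (hN : ∀ j, N j ≠ 0) (he : ∀ j, e j / N j ∈ AddSubgroup.zmultiples h) :
    ∀ᵐ ω ∂μ, sumSampleMeans X N ω - Fintype.card ι * x ∈ AddSubgroup.zmultiples h := by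
  have hall : ∀ᵐ ω ∂μ, ∀ j i, X j i ω - x ∈ AddSubgroup.zmultiples (e j) :=
    ae_all_iff.2 fun j => ae_all_iff.2 fun i => (hid j i).symm.ae_sub_mem_zmultiples (hlat j)
  filter_upwards [hall] with ω hω
  have hcentre : sumSampleMeans X N ω - Fintype.card ι * x
      = ∑ j, (N j : ℝ)⁻¹ * ∑ i ∈ range (N j), (X j i ω - x) := by
    simp [sumSampleMeans, sum_sub_distrib, mul_sub, hN]
  rw [hcentre]
  refine AddSubgroup.sum_mem _ fun j _ => ?_
  obtain ⟨z, hz⟩ := AddSubgroup.mem_zmultiples_iff.1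
    (AddSubgroup.sum_mem _ fun i _ => hω j i : ∑ i ∈ range (N j), (X j i ω - x) ∈ _)
  rw [← hz, mul_smul_comm, inv_mul_eq_div]
  exact zsmul_mem (he j) z

lemma exists_ae_sumSampleMeans_sub_mem_zmultiples [LinearOrder ι]
    (hid : ∀ j i, IdentDistrib (X j i) (X j 0) μ μ) {x : ℝ} {e : ι → ℝ}
    (hlat : ∀ j, ∀ᵐ ω ∂μ, X j 0 ω - x ∈ AddSubgroup.zmultiples (e j)) (he : ∀ j, e j ≠ 0)
    {N : ℕ → ι → ℕ} (hN : ∀ m j, N m j ≠ 0)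
    (hρ : ∀ j₁ j₂ : ι, j₁ < j₂ → ∃ q : ℚ, ∀ m,
      (e j₂ * (N m j₁ : ℝ)) / (e j₁ * (N m j₂ : ℝ)) = (q : ℝ)) (j₀ : ι) :
    ∃ D : ℕ, 0 < D ∧ ∀ m, ∀ᵐ ω ∂μ, sumSampleMeans X (N m) ω - Fintype.card ι * x ∈
      AddSubgroup.zmultiples (e j₀ / N m j₀ / D) := by
  choose q hq using exists_rat_forall_div_eq_rat_mul_div he hN hρ j₀
  obtain ⟨D, hD, hmem⟩ := exists_pos_nat_forall_rat_mul_mem_zmultiples q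
  refine ⟨D, hD, fun m => ae_sumSampleMeans_sub_mem_zmultiples hid hlat (hN m) fun j => ?_⟩
  rw [hq j m]
  exact hmem _ j

theorem exists_pos_eventually_le_cdf_approx_error [IsProbabilityMeasure μ] [LinearOrder ι]
    [Nonempty ι] (hX : ∀ j, MemLp (X j 0) 2 μ)
    (hid : ∀ j i, IdentDistrib (X j i) (X j 0) μ μ)
    (hind : iIndepFun (fun p : ι × ℕ => X p.1 p.2) μ) (hvar : ∀ j, 0 < variance (X j 0) μ)
    {x : ℝ} {e : ι → ℝ} (he : ∀ j, 0 < e j)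
    (hlat : ∀ j, ∀ᵐ ω ∂μ, X j 0 ω - x ∈ AddSubgroup.zmultiples (e j))
    {N : ℕ → ι → ℕ} (hN : ∀ m j, N m j ≠ 0) {n : ℕ → ℕ} (hn : ∀ m, n m = ∑ j, N m j)
    (hfrac : ∀ j, 0 < liminf (fun m => (N m j : ℝ) / (n m : ℝ)) atTop)
    (hρ : ∀ j₁ j₂ : ι, j₁ < j₂ → ∃ q : ℚ, ∀ m,
      (e j₂ * (N m j₁ : ℝ)) / (e j₁ * (N m j₂ : ℝ)) = (q : ℝ)) :
    ∃ c > 0, ∀ᶠ m in atTop, ∀ G : ℝ → ℝ, (∀ t, ContinuousWithinAt G (Set.Iio t) t) →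
      ∀ δ : ℝ, (∀ y, |μ.real {ω | (sumSampleMeans X (N m) ω - μ[sumSampleMeans X (N m)]) /
        √(variance (sumSampleMeans X (N m)) μ) ≤ y} - G y| ≤ δ) → c / √(n m) ≤ δ := by
  obtain ⟨j₀⟩ := ‹Nonempty ι›
  obtain ⟨C, hC⟩ := eventually_sum_div_le_div_of_liminf_pos _ (fun j => (hvar j).le) hfrac
  obtain ⟨D, hD, hgrid⟩ :=
    exists_ae_sumSampleMeans_sub_mem_zmultiples hid hlat (fun j => (he j).ne') hN hρ j₀
  have he₀ := he j₀
  set K := 4 * D * √C / e j₀ + 1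
  refine ⟨3 / 8 / K, by positivity, hC.mono fun m hCm G hG δ hδ => ?_⟩
  rw [← variance_sumSampleMeans hX hid hind] at hCm
  have hN₀ : 1 ≤ (N m j₀ : ℝ) := Nat.one_le_cast.2 (Nat.pos_of_ne_zero (hN m j₀))
  have hN₀n : (N m j₀ : ℝ) ≤ n m := by
    exact_mod_cast (hn m).symm ▸ single_le_sum (fun j _ => Nat.zero_le (N m j)) (mem_univ j₀)
  have hVpos : 0 < variance (sumSampleMeans X (N m)) μ := by
    rw [variance_sumSampleMeans hX hid hind]
    exact sum_pos (fun j _ => div_pos (hvar j) (Nat.cast_pos.2 (Nat.pos_of_ne_zero (hN m j))))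
      ⟨j₀, mem_univ _⟩
  have hcount : _ ≤ K * √(n m) :=
    four_mul_sqrt_div_add_one_le he₀ (Nat.cast_pos.2 hD) hN₀ hN₀n hCm
  have herror := cdf_approx_error_ge_of_ae_sub_mem_zmultiples
    (memLp_sumSampleMeans hX hid (N m)) hVpos (by positivity) (hgrid m) hG hδ
  have hsqrt : 0 < √(n m : ℝ) := Real.sqrt_pos.2 (by linarith)
  calc 3 / 8 / K / √(n m) = 3 / 4 / (K * √(n m)) / 2 := by field_simp; ring
    _ ≤ 3 / 4 / (4 * √(variance (sumSampleMeans X (N m)) μ) / (e j₀ / N m j₀ / D) + 1) / 2 := by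
        gcongr
    _ ≤ δ := by linarith

end SampleMeans

theorem edgeworth_one_term_fails_of_rational_ratios_general
    {Ω : Type*} [MeasureSpace Ω] [IsProbabilityMeasure (ℙ : Measure Ω)]
    (k : ℕ) (hk : 2 ≤ k)
    (X : Fin k → ℕ → Ω → ℝ)
    (e xl : Fin k → ℝ)
    (hmeas : ∀ j i, Measurable (X j i))
    (hindep : iIndepFun
      (fun p : Fin k × ℕ => X p.1 p.2) ℙ)
    (hident : ∀ j i, Measure.map (X j i) ℙ = Measure.map (X j 0) ℙ)
    (hmom3 : ∀ j, Integrable (fun ω => |X j 0 ω| ^ 3) ℙ)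
    (hepos : ∀ j, 0 < e j)
    (hlattice : ∀ j, ∀ᵐ ω ∂ℙ, ∃ ν : ℤ, X j 0 ω = xl j + ν * e j)
    (hnondeg : ∀ j, 0 < variance (X j 0) ℙ)
    (nn : ℕ → Fin k → ℕ) (hnpos : ∀ m j, 0 < nn m j)
    (n : ℕ → ℕ) (hn : ∀ m, n m = ∑ j, nn m j)
    (hfrac : ∀ j, 0 < Filter.liminf (fun m => (nn m j : ℝ) / (n m : ℝ)) atTop)
    (S : ℕ → Ω → ℝ)
    (hS : ∀ m ω, S m ω = ∑ j, (nn m j : ℝ)⁻¹ * ∑ i ∈ Finset.range (nn m j), X j i ω)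
    (ES VarS β : ℕ → ℝ)
    (hES : ∀ m, ES m = ∫ ω, S m ω ∂ℙ)
    (hVarS : ∀ m, VarS m = ∫ ω, (S m ω - ES m) ^ 2 ∂ℙ)
    -- all lattice locations equal
    (hxeq : ∀ j j' : Fin k, xl j = xl j')
    -- every ratio ρ_{j₁j₂} equals a fixed rational number, not depending on n
    (hρrat : ∀ j₁ j₂ : Fin k, j₁ < j₂ → ∃ q : ℚ, ∀ m,
      (e j₂ * (nn m j₁ : ℝ)) / (e j₁ * (nn m j₂ : ℝ)) = (q : ℝ)) :
    -- conclusion: it is NOT the case that the sup of the error is o(n^{-1/2})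
    ¬ (∀ ε > 0, ∀ᶠ m in atTop, ∀ x : ℝ,
      |(ℙ {ω | (S m ω - ES m) / Real.sqrt (VarS m) ≤ x}).toReal
          - gPhi x - (Real.sqrt (n m))⁻¹ * (β m / 6) * (1 - x ^ 2) * gphi x|
        ≤ ε * (Real.sqrt (n m))⁻¹) := by
  intro hsmall
  have j₀ : Fin k := ⟨0, by omega⟩
  have hid : ∀ j i, IdentDistrib (X j i) (X j 0) ℙ ℙ := fun j i =>
    ⟨(hmeas j i).aemeasurable, (hmeas j 0).aemeasurable, hident j i⟩
  have hX : ∀ j, MemLp (X j 0) 2 ℙ := fun j =>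
    memLp_two_of_integrable_abs_pow_three (hmeas j 0).aestronglyMeasurable (hmom3 j)
  have hlat : ∀ j, ∀ᵐ ω ∂ℙ, X j 0 ω - xl j₀ ∈ AddSubgroup.zmultiples (e j) := fun j =>
    (hlattice j).mono fun ω ⟨ν, hν⟩ => AddSubgroup.mem_zmultiples_iff.2
      ⟨ν, by rw [hν, hxeq j j₀, zsmul_eq_mul]; ring⟩
  have : Nonempty (Fin k) := ⟨j₀⟩
  obtain ⟨c, hc, hgap⟩ := exists_pos_eventually_le_cdf_approx_error hX hid hindep hnondeg hepos
    hlat (fun m j => (hnpos m j).ne') hn hfrac hρrat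
  obtain ⟨m, hm, hgapm⟩ := ((hsmall (c / 2) (half_pos hc)).and hgap).exists
  have hSm : S m = sumSampleMeans X (nn m) := funext (hS m)
  have hVar : VarS m = variance (S m) ℙ := by
    rw [hVarS, hES]
    exact (variance_eq_integral (hSm ▸ memLp_sumSampleMeans hX hid (nn m)).aemeasurable).symm
  have hle := hgapm (edgeworthOneTerm ((√(n m))⁻¹ * (β m / 6)))
    (fun t => (continuousWithinAt_edgeworthOneTerm_Iic _ t).mono Set.Iio_subset_Iic_self) _
    fun y => by
      simpa only [← hSm, ← hES, ← hVar, edgeworthOneTerm, sub_sub, measureReal_def] using hm y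
  have hn₀ : 0 < n m := hn m ▸ sum_pos (fun j _ => hnpos m j) ⟨j₀, mem_univ _⟩
  have hsqrt : 0 < √(n m : ℝ) := Real.sqrt_pos.2 (Nat.cast_pos.2 hn₀)
  rw [div_eq_mul_inv] at hle
  nlinarith [mul_pos hc (inv_pos.2 hsqrt)]

/-- **Theorem 1(ii)** (Decrouez & Hall).  In the setting of Theorem 1, if every ratio
`ρ_{j₁j₂} = (e_{j₂} n_{j₁}) / (e_{j₁} n_{j₂})` equals a fixed rational number not depending
on `n`, and all the lattice locations `x_j` coincide, then the one-term Edgeworth expansion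
fails: the supremum over `x` of the error of the expansion is *not* `o(n^{-1/2})`. -/
theorem edgeworth_one_term_fails_of_rational_ratios
    {Ω : Type*} [MeasureSpace Ω] [IsProbabilityMeasure (ℙ : Measure Ω)]
    (k : ℕ) (hk : 2 ≤ k)
    (X : Fin k → ℕ → Ω → ℝ)
    (e xl : Fin k → ℝ)
    (hmeas : ∀ j i, Measurable (X j i))
    (hindep : iIndepFun
      (fun p : Fin k × ℕ => X p.1 p.2) ℙ)
    (hident : ∀ j i, Measure.map (X j i) ℙ = Measure.map (X j 0) ℙ)
    (hmom3 : ∀ j, Integrable (fun ω => |X j 0 ω| ^ 3) ℙ)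
    (hepos : ∀ j, 0 < e j)
    (hlattice : ∀ j, ∀ᵐ ω ∂ℙ, ∃ ν : ℤ, X j 0 ω = xl j + ν * e j)
    (hmaximal : ∀ j, ∀ e' x' : ℝ, 0 < e' →
      (∀ᵐ ω ∂ℙ, ∃ ν : ℤ, X j 0 ω = x' + ν * e') → e' ≤ e j)
    (hnondeg : ∀ j, 0 < variance (X j 0) ℙ)
    (nn : ℕ → Fin k → ℕ) (hnpos : ∀ m j, 0 < nn m j)
    (n : ℕ → ℕ) (hn : ∀ m, n m = ∑ j, nn m j) (hmono : StrictMono n)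
    (hfrac : ∀ j, 0 < Filter.liminf (fun m => (nn m j : ℝ) / (n m : ℝ)) atTop)
    (S : ℕ → Ω → ℝ)
    (hS : ∀ m ω, S m ω = ∑ j, (nn m j : ℝ)⁻¹ * ∑ i ∈ Finset.range (nn m j), X j i ω)
    (ES VarS β : ℕ → ℝ)
    (hES : ∀ m, ES m = ∫ ω, S m ω ∂ℙ)
    (hVarS : ∀ m, VarS m = ∫ ω, (S m ω - ES m) ^ 2 ∂ℙ)
    (hβ : ∀ m, β m = Real.sqrt (n m) * (∫ ω, (S m ω - ES m) ^ 3 ∂ℙ) / Real.sqrt (VarS m) ^ 3)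
    -- all lattice locations equal
    (hxeq : ∀ j j' : Fin k, xl j = xl j')
    -- every ratio ρ_{j₁j₂} equals a fixed rational number, not depending on n
    (hρrat : ∀ j₁ j₂ : Fin k, j₁ < j₂ → ∃ q : ℚ, ∀ m,
      (e j₂ * (nn m j₁ : ℝ)) / (e j₁ * (nn m j₂ : ℝ)) = (q : ℝ)) :
    -- conclusion: it is NOT the case that the sup of the error is o(n^{-1/2})
    ¬ (∀ ε > 0, ∀ᶠ m in atTop, ∀ x : ℝ,
      |(ℙ {ω | (S m ω - ES m) / Real.sqrt (VarS m) ≤ x}).toReal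
          - gPhi x - (Real.sqrt (n m))⁻¹ * (β m / 6) * (1 - x ^ 2) * gphi x|
        ≤ ε * (Real.sqrt (n m))⁻¹) :=
  edgeworth_one_term_fails_of_rational_ratios_general k hk X e xl hmeas hindep hident hmom3 hepos
    hlattice hnondeg nn hnpos n hn hfrac S hS ES VarS β hES hVarS hxeq hρrat
end

section
/- Let ρ₀ be an irrational number of type η < ∞, let δ > 0, and let C > 0 be a constant such that ⟨ℓρ₀⟩ ≥ C ℓ^{−η−δ} for all integers ℓ ≥ 1. Let m ≥ 1 be an integer and let τ be a real number with |τ − ρ₀| ≤ C π^{−1} m^{−(1+η+δ)}. Then |sin(ℓτπ)| ≥ ⟨ℓρ₀⟩ for every ℓ with 1 ≤ ℓ ≤ m, and consequently ∑_{ℓ=1}^m 1/(ℓ|sin(ℓτπ)|) ≤ ∑_{ℓ=1}^m 1/(ℓ⟨ℓρ₀⟩). -/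
open Filter

/-- `⟨x⟩`, the distance from `x` to the nearest integer:
`⟨x⟩ = min {x − ⌊x⌋, 1 − (x − ⌊x⌋)}`. -/
noncomputable def distNearestInt (x : ℝ) : ℝ := min (x - ⌊x⌋) (1 - (x - ⌊x⌋))

/-- The set of exponents `ζ ≥ 0` with `liminf_{p → ∞} p^ζ ⟨pρ⟩ = 0` (`p` a positive
integer); the liminf condition is expressed in its `ε`–`frequently` form. -/
def typeSet (ρ : ℝ) : Set ℝ :=
  {ζ : ℝ | 0 ≤ ζ ∧ ∀ ε > 0, ∃ᶠ p : ℕ in atTop, (p : ℝ) ^ ζ * distNearestInt (p * ρ) < ε}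

/-- An irrational number `ρ` is of type `η` if `η` is the supremum of `typeSet ρ`. -/
def IsOfType (ρ η : ℝ) : Prop := IsLUB (typeSet ρ) η

/-!
Since `|sin (xπ)| ≥ 2⟨x⟩` (Jordan's inequality) and `sin` is 1-Lipschitz, `|sin (yπ)| ≥ ⟨x⟩`
as soon as `π|y − x| ≤ ⟨x⟩`. For `y = ℓτ`, `x = ℓρ₀` and `ℓ ≤ m` the hypothesis on `τ` gives
`π|ℓτ − ℓρ₀| ≤ C ℓ m^{−(1+η+δ)} ≤ C ℓ^{−η−δ} ≤ ⟨ℓρ₀⟩`; the middle step needs `η + δ ≥ −1`,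
which holds because `C ℓ^{−η−δ} ≤ ⟨ℓρ₀⟩ ≤ 1/2` for all `ℓ` forces `η + δ ≥ 0`.
The inequality between the sums then holds termwise.
-/

open Real

lemma distNearestInt_eq_abs_sub_round (x : ℝ) : distNearestInt x = |x - round x| := by
  rw [abs_sub_round_eq_min]; rfl

lemma distNearestInt_le_half (x : ℝ) : distNearestInt x ≤ 1 / 2 := by
  rw [distNearestInt_eq_abs_sub_round]; exact abs_sub_round x

lemma two_mul_distNearestInt_le_abs_sin (x : ℝ) : 2 * distNearestInt x ≤ |sin (x * π)| := by
  rw [distNearestInt_eq_abs_sub_round]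
  set y := x - round x
  have hsin : |sin (x * π)| = |sin (y * π)| := by
    rw [show x * π = y * π + (round x : ℤ) * π by ring, sin_add_int_mul_pi, abs_mul,
      abs_neg_one_zpow, one_mul]
  have hy : |y * π| = |y| * π := by rw [abs_mul, abs_of_pos pi_pos]
  have hy_half : |y * π| ≤ π / 2 := by
    rw [hy]; nlinarith [abs_sub_round x, pi_pos]
  calc 2 * |y| = 2 / π * |y * π| := by rw [hy]; field_simp
    _ ≤ |sin (y * π)| := mul_abs_le_abs_sin hy_half
    _ = |sin (x * π)| := hsin.symm

lemma distNearestInt_le_abs_sin_of_abs_sub_mul_pi_le {x y : ℝ}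
    (h : |y - x| * π ≤ distNearestInt x) : distNearestInt x ≤ |sin (y * π)| := by
  have hlip : |sin (x * π)| - |sin (y * π)| ≤ |y - x| * π :=
    calc |sin (x * π)| - |sin (y * π)| ≤ |sin (x * π) - sin (y * π)| :=
          abs_sub_abs_le_abs_sub _ _
      _ ≤ |x * π - y * π| := abs_sin_sub_sin_le _ _
      _ = |y - x| * π := by rw [← sub_mul, abs_mul, abs_of_pos pi_pos, abs_sub_comm]
  linarith [two_mul_distNearestInt_le_abs_sin x]

lemma nonneg_of_forall_mul_rpow_neg_le_distNearestInt {ρ C s : ℝ} (hC : 0 < C)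
    (h : ∀ ℓ : ℕ, 1 ≤ ℓ → C * (ℓ : ℝ) ^ (-s) ≤ distNearestInt (ℓ * ρ)) : 0 ≤ s := by
  by_contra! hs
  have hlarge : ∀ᶠ ℓ : ℕ in atTop, 1 / (2 * C) < (ℓ : ℝ) ^ (-s) :=
    ((tendsto_rpow_atTop (neg_pos.2 hs)).comp
      tendsto_natCast_atTop_atTop).eventually_gt_atTop _
  obtain ⟨ℓ, hℓ, hℓ1⟩ := (hlarge.and (eventually_ge_atTop 1)).exists
  have := (h ℓ hℓ1).trans (distNearestInt_le_half _)
  rw [div_lt_iff₀' (by positivity)] at hℓ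
  linarith

lemma natCast_mul_rpow_neg_one_add_le {ℓ m : ℕ} {s : ℝ} (hℓ : 1 ≤ ℓ) (hℓm : ℓ ≤ m)
    (hs : -1 ≤ s) : (ℓ : ℝ) * (m : ℝ) ^ (-(1 + s)) ≤ (ℓ : ℝ) ^ (-s) := by
  have hℓpos : (0 : ℝ) < ℓ := by exact_mod_cast hℓ
  calc (ℓ : ℝ) * (m : ℝ) ^ (-(1 + s)) ≤ ℓ * (ℓ : ℝ) ^ (-(1 + s)) :=
        mul_le_mul_of_nonneg_left
          (rpow_le_rpow_of_nonpos hℓpos (Nat.cast_le.2 hℓm) (by linarith)) hℓpos.le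
    _ = (ℓ : ℝ) ^ (-s) := by
        rw [show -s = 1 + -(1 + s) by ring, rpow_add hℓpos, rpow_one]

theorem sum_inv_abs_sin_le_sum_inv_distNearestInt_general
    (ρ₀ η δ C : ℝ) (hC : 0 < C)
    (hlow : ∀ ℓ : ℕ, 1 ≤ ℓ → C * (ℓ : ℝ) ^ (-η - δ) ≤ distNearestInt (ℓ * ρ₀))
    (m : ℕ) (τ : ℝ)
    (hτ : |τ - ρ₀| ≤ C / Real.pi * (m : ℝ) ^ (-(1 + η + δ))) :
    (∀ ℓ : ℕ, 1 ≤ ℓ → ℓ ≤ m →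
        distNearestInt (ℓ * ρ₀) ≤ |Real.sin (ℓ * τ * Real.pi)|) ∧
      ∑ ℓ ∈ Finset.Icc 1 m, 1 / ((ℓ : ℝ) * |Real.sin (ℓ * τ * Real.pi)|) ≤
        ∑ ℓ ∈ Finset.Icc 1 m, 1 / ((ℓ : ℝ) * distNearestInt (ℓ * ρ₀)) := by
  simp only [sub_eq_add_neg (-η), ← neg_add, add_assoc] at hlow hτ
  have hηδ : 0 ≤ η + δ := nonneg_of_forall_mul_rpow_neg_le_distNearestInt hC hlow
  have hpoint (ℓ : ℕ) (hℓ : 1 ≤ ℓ) (hℓm : ℓ ≤ m) :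
      distNearestInt (ℓ * ρ₀) ≤ |sin (ℓ * τ * π)| := by
    refine distNearestInt_le_abs_sin_of_abs_sub_mul_pi_le ?_
    calc |ℓ * τ - ℓ * ρ₀| * π = ℓ * π * |τ - ρ₀| := by
          rw [← mul_sub, abs_mul, Nat.abs_cast]; ring
      _ ≤ ℓ * π * (C / π * (m : ℝ) ^ (-(1 + (η + δ)))) := by gcongr
      _ = C * (ℓ * (m : ℝ) ^ (-(1 + (η + δ)))) := by field_simp
      _ ≤ C * (ℓ : ℝ) ^ (-(η + δ)) := by
          gcongr; exact natCast_mul_rpow_neg_one_add_le hℓ hℓm (by linarith)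
      _ ≤ distNearestInt (ℓ * ρ₀) := hlow ℓ hℓ
  refine ⟨hpoint, Finset.sum_le_sum fun ℓ hℓ => ?_⟩
  obtain ⟨hℓ, hℓm⟩ := Finset.mem_Icc.1 hℓ
  have hℓ_pos : (0 : ℝ) < ℓ := by exact_mod_cast hℓ
  have hdist_pos := (mul_pos hC (rpow_pos_of_pos hℓ_pos _)).trans_le (hlow ℓ hℓ)
  exact one_div_le_one_div_of_le (by positivity)
    (mul_le_mul_of_nonneg_left (hpoint ℓ hℓ hℓm) hℓ_pos.le)

/-- Let `ρ₀` be an irrational number of (finite) type `η`, `δ > 0`, and `C > 0` a constant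
with `⟨ℓρ₀⟩ ≥ C ℓ^{−η−δ}` for all integers `ℓ ≥ 1`.  If `m ≥ 1` is an integer and `τ` a
real number with `|τ − ρ₀| ≤ C π^{−1} m^{−(1+η+δ)}`, then `|sin (ℓτπ)| ≥ ⟨ℓρ₀⟩` for every
`1 ≤ ℓ ≤ m`, and consequently
`∑_{ℓ=1}^m 1/(ℓ|sin (ℓτπ)|) ≤ ∑_{ℓ=1}^m 1/(ℓ⟨ℓρ₀⟩)`. -/
theorem sum_inv_abs_sin_le_sum_inv_distNearestInt
    (ρ₀ η δ C : ℝ) (hirr : Irrational ρ₀) (htype : IsOfType ρ₀ η)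
    (hδ : 0 < δ) (hC : 0 < C)
    (hlow : ∀ ℓ : ℕ, 1 ≤ ℓ → C * (ℓ : ℝ) ^ (-η - δ) ≤ distNearestInt (ℓ * ρ₀))
    (m : ℕ) (hm : 1 ≤ m) (τ : ℝ)
    (hτ : |τ - ρ₀| ≤ C / Real.pi * (m : ℝ) ^ (-(1 + η + δ))) :
    (∀ ℓ : ℕ, 1 ≤ ℓ → ℓ ≤ m →
        distNearestInt (ℓ * ρ₀) ≤ |Real.sin (ℓ * τ * Real.pi)|) ∧
      ∑ ℓ ∈ Finset.Icc 1 m, 1 / ((ℓ : ℝ) * |Real.sin (ℓ * τ * Real.pi)|) ≤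
        ∑ ℓ ∈ Finset.Icc 1 m, 1 / ((ℓ : ℝ) * distNearestInt (ℓ * ρ₀)) :=
  sum_inv_abs_sin_le_sum_inv_distNearestInt_general ρ₀ η δ C hC hlow m τ hτ
end
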